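/- arXiv:2307.14820 — 5 statements merged into one kernel-verified Lean document; each statement's English description precedes it below -/
import Mathlib

section
/- Let G be a finite non-solvable group. Then G has property SN if and only if G has a unique minimal normal subgroup S such that S is non-abelian and G/S is a Dedekind group. Moreover, in that case S equals the socle of G and is a direct product of isomorphic finite simple groups, and if S is simple then the conjugation action of G on S is faithful (so G is almost simple). -/
/-- Property SN: for every normal subgroup `N` and every subgroup `Y` of `G`, either
`N ≤ Y` or the product `NY` (which equals `N ⊔ Y` since `N` is normal) is normal in `G`. -/
def HasSN (G : Type*) [Group G] : Prop :=
  ∀ N : Subgroup G, N.Normal → ∀ Y : Subgroup G, N ≤ Y ∨ (N ⊔ Y).Normal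

/-- Property SSN: every subgroup of `G` has SN. -/
def HasSSN (G : Type*) [Group G] : Prop :=
  ∀ H : Subgroup G, HasSN H

/-- A Dedekind group: every subgroup is normal. -/
def IsDedekind (G : Type*) [Group G] : Prop :=
  ∀ H : Subgroup G, H.Normal

/-- A minimal normal subgroup: a non-trivial normal subgroup containing no non-trivial
normal subgroup of `G` properly inside it. -/
def IsMinNormal {G : Type*} [Group G] (N : Subgroup G) : Prop :=
  N.Normal ∧ N ≠ ⊥ ∧ ∀ M : Subgroup G, M.Normal → M ≤ N → M ≠ ⊥ → M = N

/-- The socle of `G`: the subgroup generated by all minimal normal subgroups. -/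
def socle (G : Type*) [Group G] : Subgroup G :=
  sSup {N : Subgroup G | IsMinNormal N}

/-!
Under SN, if `A ≠ ⊥` and `B` are normal with `A ⊓ B = ⊥`, then every `Y ≤ B` is normal, being
`(A ⊔ Y) ⊓ B`. Hence a non-abelian minimal normal subgroup `S` is the only one (otherwise its
cyclic subgroups would be normal), and every `H ≥ S` is normal, as `h ∈ S ⊔ ⟨h⟩ ≤ H` with
`S ⊔ ⟨h⟩` normal.

A non-abelian minimal normal subgroup exists, by induction on `|G|`. If a minimal normal `S` is
abelian, it is a `p`-group, and `G ⧸ S`, again SN and non-solvable, has a non-abelian minimal normal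
subgroup `T`. Unless `T` is a `p`-group, take a prime `q ≠ p` dividing `|T|` and the preimage `V`
of a Sylow `q`-subgroup of `T`: Schur–Zassenhaus gives a complement `Y` of `S` in `V`, so
`V = S ⊔ Y` is normal and the Sylow subgroup is all of `T`. Either way `T` has prime power order,
so its centre, normal in `G ⧸ S`, is all of `T`: a contradiction.

The structure of `S` is the classical one: a maximal independent family of `G`-conjugates of a
minimal normal subgroup `T₁` of `S` generates `S`, its members commute with each other, and so
`T₁` is simple and `S ≃* T₁ ^ F`.
-/

open Subgroup
open scoped Pointwise

universe u

section MinNormal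

variable {G : Type*} [Group G]

theorem exists_isMinNormal_le [Finite G] {N : Subgroup G} (hN : N.Normal) (hN₀ : N ≠ ⊥) :
    ∃ M, IsMinNormal M ∧ M ≤ N := by
  obtain ⟨M, hMN, hM⟩ :=
    exists_minimal_le_of_wellFoundedLT (fun K : Subgroup G => K.Normal ∧ K ≠ ⊥) N ⟨hN, hN₀⟩
  exact ⟨M, ⟨hM.prop.1, hM.prop.2, fun K hK hKM hK₀ => hM.eq_of_le ⟨hK, hK₀⟩ hKM⟩, hMN⟩

theorem IsMinNormal.disjoint_of_ne {S T : Subgroup G} (hS : IsMinNormal S) (hT : IsMinNormal T)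
    (hne : S ≠ T) : Disjoint S T := by
  have := hS.1
  have := hT.1
  rw [disjoint_iff]
  by_contra h
  exact hne ((hS.2.2 _ inferInstance inf_le_left h).symm.trans
    (hT.2.2 _ inferInstance inf_le_right h))

theorem commute_of_le_zpowers {S : Subgroup G} {g : G} (h : S ≤ zpowers g) :
    ∀ x ∈ S, ∀ y ∈ S, x * y = y * x := by
  intro x hx y hy
  obtain ⟨m, rfl⟩ := mem_zpowers_iff.mp (h hx)
  obtain ⟨k, rfl⟩ := mem_zpowers_iff.mp (h hy)
  exact zpow_mul_comm g m k

theorem IsMinNormal.exists_card_eq_prime_pow [Finite G] {S : Subgroup G} (hS : IsMinNormal S)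
    (hab : ∀ x ∈ S, ∀ y ∈ S, x * y = y * x) : ∃ p k : ℕ, p.Prime ∧ Nat.card S = p ^ k := by
  have := hS.1
  obtain ⟨p, hp, hpS⟩ :=
    Nat.exists_prime_and_dvd ((one_lt_card_iff_ne_bot S).mpr hS.2.1).ne'
  have := Fact.mk hp
  have : IsMulCommutative S := ⟨⟨fun a b => Subtype.ext (hab a a.2 b b.2)⟩⟩
  obtain ⟨P⟩ : Nonempty (Sylow p S) := inferInstance
  -- an abelian group has a unique, hence characteristic, Sylow `p`-subgroup
  have := P.characteristic_of_normal (normal_of_isMulCommutative _)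
  have hPS : (P : Subgroup S).map S.subtype = S :=
    hS.2.2 _ inferInstance (map_subtype_le _)
      ((map_eq_bot_iff_of_injective _ S.subtype_injective).not.mpr (P.ne_bot_of_dvd_card hpS))
  have hSp : IsPGroup p S := hPS ▸ P.isPGroup'.map S.subtype
  obtain ⟨k, hk⟩ := hSp.exists_card_eq
  exact ⟨p, k, hp, hk⟩

theorem IsMinNormal.commute_of_card_eq_prime_pow [Finite G] {T : Subgroup G}
    (hT : IsMinNormal T) {q m : ℕ} (hq : q.Prime) (hcard : Nat.card T = q ^ m) :
    ∀ x ∈ T, ∀ y ∈ T, x * y = y * x := by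
  have := Fact.mk hq
  have := hT.1
  have : Nontrivial T := (nontrivial_iff_ne_bot T).mpr hT.2.1
  have := (IsPGroup.of_card hcard).center_nontrivial
  obtain ⟨z, hz⟩ := exists_ne (1 : center T)
  have hzZ : ((z : T) : G) ∈ centralizer (T : Set G) ⊓ T :=
    ⟨mem_centralizer_iff.mpr fun y hy =>
      congrArg Subtype.val (mem_center_iff.mp z.2 ⟨y, hy⟩), (z : T).2⟩
  have hZ : centralizer (T : Set G) ⊓ T = T := by
    refine hT.2.2 _ inferInstance inf_le_right fun h => hz ?_
    rw [h, mem_bot] at hzZ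
    exact Subtype.ext (Subtype.ext hzZ)
  intro x hx y hy
  exact mem_centralizer_iff.mp (mem_inf.mp (hZ.ge hy)).1 x hx

end MinNormal

section SN

variable {G : Type*} [Group G]

theorem HasSN.of_surjective {G' : Type*} [Group G'] (hsn : HasSN G) {f : G →* G'}
    (hf : Function.Surjective f) : HasSN G' := by
  intro N hN Y
  refine (hsn _ (hN.comap f) (Y.comap f)).imp (comap_le_comap_of_surjective hf).mp fun h => ?_
  have := h.map f hf
  rwa [Subgroup.map_sup, map_comap_eq_self_of_surjective hf, map_comap_eq_self_of_surjective hf]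
    at this

theorem HasSN.normal_of_le_of_disjoint (hsn : HasSN G) {A B Y : Subgroup G} (hA : A.Normal)
    (hB : B.Normal) (hA₀ : A ≠ ⊥) (hAB : Disjoint A B) (hYB : Y ≤ B) : Y.Normal := by
  have hAY : ¬ A ≤ Y := fun h => hA₀ (disjoint_self.mp (hAB.mono_right (h.trans hYB)))
  have := (hsn A hA Y).resolve_left hAY
  have := hB
  have hY : (A ⊔ Y) ⊓ B = Y := by
    refine le_antisymm (fun x hx => ?_) (le_inf le_sup_right hYB)
    obtain ⟨a, ha, y, hy, rfl⟩ := mem_sup_of_normal_left.mp (mem_inf.mp hx).1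
    have haB : a ∈ B := by simpa using mul_mem (mem_inf.mp hx).2 (inv_mem (hYB hy))
    rwa [disjoint_def.mp hAB ha haB, one_mul]
  rw [← hY]
  infer_instance

theorem HasSN.normal_of_nonabelian_le (hsn : HasSN G) {S : Subgroup G} (hS : S.Normal)
    (hna : ¬ ∀ x ∈ S, ∀ y ∈ S, x * y = y * x) {H : Subgroup G} (hSH : S ≤ H) : H.Normal := by
  refine ⟨fun h hh g => ?_⟩
  have hnorm : (S ⊔ zpowers h).Normal :=
    (hsn S hS (zpowers h)).resolve_left fun hle => hna (commute_of_le_zpowers hle)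
  exact sup_le hSH (zpowers_le.mpr hh) (hnorm.conj_mem h (mem_sup_right (mem_zpowers h)) g)

theorem HasSN.eq_of_isMinNormal (hsn : HasSN G) {S T : Subgroup G} (hS : IsMinNormal S)
    (hna : ¬ ∀ x ∈ S, ∀ y ∈ S, x * y = y * x) (hT : IsMinNormal T) : T = S := by
  by_contra hne
  obtain ⟨x, hxS, hx⟩ := (bot_or_exists_ne_one S).resolve_left hS.2.1
  have hxS' : zpowers x ≤ S := zpowers_le.mpr hxS
  have hzpowers : zpowers x = S :=
    hS.2.2 _ (hsn.normal_of_le_of_disjoint hT.1 hS.1 hT.2.1 (hT.disjoint_of_ne hS hne) hxS')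
      hxS' (zpowers_ne_bot.mpr hx)
  exact hna (commute_of_le_zpowers hzpowers.ge)

theorem HasSN.normal_of_coprime_relIndex (hsn : HasSN G) {S V : Subgroup G} [S.Normal]
    (hS₀ : S ≠ ⊥) (hSV : S ≤ V) (hcop : (Nat.card S).Coprime (S.relIndex V)) : V.Normal := by
  set N := S.subgroupOf V
  have hN : N.map V.subtype = S := by rw [subgroupOf_map_subtype, inf_eq_left.mpr hSV]
  have hcard : Nat.card N = Nat.card S := Nat.card_congr (subgroupOfEquivOfLe hSV).toEquiv
  obtain ⟨K, hK⟩ := exists_right_complement'_of_coprime (N := N) (hcard ▸ hcop)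
  have hSK : ¬ S ≤ K.map V.subtype := by
    rw [← hN, map_subtype_le_map_subtype]
    intro hNK
    apply hS₀
    rw [← hN, disjoint_self.mp (hK.disjoint.mono_right hNK), Subgroup.map_bot]
  have := (hsn S ‹_› (K.map V.subtype)).resolve_left hSK
  rwa [← hN, ← Subgroup.map_sup, hK.sup_eq_top, ← MonoidHom.range_eq_map, range_subtype] at this

theorem HasSN.normal_of_coprime_card (hsn : HasSN G) {S : Subgroup G} [S.Normal] (hS₀ : S ≠ ⊥)
    {Q : Subgroup (G ⧸ S)} (hcop : (Nat.card S).Coprime (Nat.card Q)) : Q.Normal := by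
  have hsurj := QuotientGroup.mk'_surjective S
  have hSV : S ≤ Q.comap (QuotientGroup.mk' S) := fun x hx => by
    rw [mem_comap, QuotientGroup.mk'_apply, (QuotientGroup.eq_one_iff x).mpr hx]
    exact one_mem Q
  have hidx : S.relIndex (Q.comap (QuotientGroup.mk' S)) = Nat.card Q := by
    have := relIndex_comap (H := ⊥) (QuotientGroup.mk' S) (Q.comap (QuotientGroup.mk' S))
    rwa [MonoidHom.comap_bot, QuotientGroup.ker_mk', map_comap_eq_self_of_surjective hsurj,
      relIndex_bot_left] at this
  rw [← map_comap_eq_self_of_surjective hsurj Q]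
  exact (hsn.normal_of_coprime_relIndex hS₀ hSV (hidx ▸ hcop)).map _ hsurj

theorem HasSN.exists_card_eq_prime_pow_of_isMinNormal_quotient [Finite G] (hsn : HasSN G)
    {S : Subgroup G} [S.Normal] (hS₀ : S ≠ ⊥) {p k : ℕ} (hp : p.Prime) (hS : Nat.card S = p ^ k)
    {T : Subgroup (G ⧸ S)} (hT : IsMinNormal T) : ∃ q m : ℕ, q.Prime ∧ Nat.card T = q ^ m := by
  by_cases h : ∀ q, q.Prime → q ∣ Nat.card T → q = p
  · exact ⟨p, _, hp, Nat.eq_prime_pow_of_unique_prime_dvd Nat.card_pos.ne' (h _ · ·)⟩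
  push Not at h
  obtain ⟨q, hq, hqT, hqp⟩ := h
  have := Fact.mk hq
  obtain ⟨Q⟩ : Nonempty (Sylow q T) := inferInstance
  have hcardQ : Nat.card ((Q : Subgroup T).map T.subtype) = q ^ (Nat.card T).factorization q := by
    rw [card_map_of_injective T.subtype_injective, Q.card_eq_multiplicity]
  have hcop : (Nat.card S).Coprime (Nat.card ((Q : Subgroup T).map T.subtype)) := by
    rw [hS, hcardQ]
    exact Nat.Coprime.pow _ _ ((Nat.coprime_primes hp hq).mpr hqp.symm)
  have hQT : (Q : Subgroup T).map T.subtype = T :=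
    hT.2.2 _ (hsn.normal_of_coprime_card hS₀ hcop) (map_subtype_le _)
      ((map_eq_bot_iff_of_injective _ T.subtype_injective).not.mpr (Q.ne_bot_of_dvd_card hqT))
  rw [hQT] at hcardQ
  exact ⟨q, _, hq, hcardQ⟩

theorem HasSN.exists_isMinNormal_nonabelian {G : Type u} [Group G] [Finite G] (hsn : HasSN G)
    (hns : ¬ Group.IsSolvable G) :
    ∃ S : Subgroup G, IsMinNormal S ∧ ¬ ∀ x ∈ S, ∀ y ∈ S, x * y = y * x := by
  induction h : Nat.card G using Nat.strong_induction_on generalizing G with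
  | _ n ih =>
    have : Nontrivial G := by
      by_contra h
      rw [not_nontrivial_iff_subsingleton] at h
      exact hns inferInstance
    obtain ⟨S, hS, -⟩ := exists_isMinNormal_le (N := (⊤ : Subgroup G)) normal_top top_ne_bot
    by_cases hab : ∀ x ∈ S, ∀ y ∈ S, x * y = y * x
    swap
    · exact ⟨S, hS, hab⟩
    exfalso
    have := hS.1
    have hquot : ¬ Group.IsSolvable (G ⧸ S) := fun h' =>
      hns ((Group.isSolvable_iff_subgroup_quotient S).mpr
        ⟨Group.isSolvable_of_comm fun a b => Subtype.ext (hab a a.2 b b.2), h'⟩)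
    have hlt : Nat.card (G ⧸ S) < n := by
      rw [← h, card_eq_card_quotient_mul_card_subgroup S]
      exact lt_mul_of_one_lt_right Nat.card_pos ((one_lt_card_iff_ne_bot S).mpr hS.2.1)
    obtain ⟨T, hT, hTna⟩ :=
      ih _ hlt (hsn.of_surjective (QuotientGroup.mk'_surjective S)) hquot rfl
    obtain ⟨p, k, hp, hpk⟩ := hS.exists_card_eq_prime_pow hab
    obtain ⟨q, m, hq, hqm⟩ := hsn.exists_card_eq_prime_pow_of_isMinNormal_quotient hS.2.1 hp hpk hT
    exact hTna (hT.commute_of_card_eq_prime_pow hq hqm)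

theorem hasSN_of_forall_isMinNormal_eq [Finite G] {S : Subgroup G}
    (huniq : ∀ T, IsMinNormal T → T = S) (hS : ∀ H, S ≤ H → H.Normal) : HasSN G := by
  intro N hN Y
  by_cases hN₀ : N = ⊥
  · exact Or.inl (hN₀ ▸ bot_le)
  · obtain ⟨M, hM, hMN⟩ := exists_isMinNormal_le hN hN₀
    exact Or.inr (hS _ ((huniq M hM ▸ hMN).trans le_sup_left))

theorem socle_eq_of_forall_isMinNormal_eq {S : Subgroup G} (hS : IsMinNormal S)
    (huniq : ∀ T, IsMinNormal T → T = S) : socle G = S := by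
  rw [socle, Set.eq_singleton_iff_unique_mem (s := {N | IsMinNormal N}).mpr ⟨hS, huniq⟩,
    sSup_singleton]

theorem centralizer_eq_bot_of_forall_isMinNormal_eq [Finite G] {S : Subgroup G} [S.Normal]
    (huniq : ∀ T, IsMinNormal T → T = S) (hna : ¬ ∀ x ∈ S, ∀ y ∈ S, x * y = y * x) :
    centralizer (S : Set G) = ⊥ := by
  by_contra hC
  obtain ⟨M, hM, hMC⟩ := exists_isMinNormal_le inferInstance hC
  rw [huniq M hM] at hMC
  exact hna fun x hx y hy => mem_centralizer_iff.mp (hMC hy) x hx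

end SN

section Decomposition

variable {Γ : Type*} {H : Type u} [Group Γ] [Group H] [MulDistribMulAction Γ H]

theorem Subgroup.Normal.pointwise_smul {N : Subgroup H} (hN : N.Normal) (g : Γ) :
    (g • N).Normal :=
  hN.map _ fun y => ⟨g⁻¹ • y, smul_inv_smul g y⟩

theorem IsMinNormal.pointwise_smul {N : Subgroup H} (hN : IsMinNormal N) (g : Γ) :
    IsMinNormal (g • N) := by
  refine ⟨hN.1.pointwise_smul g, fun h => hN.2.1 ?_, fun M hM hMN hM₀ => ?_⟩
  · rwa [smul_eq_iff_eq_inv_smul, smul_bot] at h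
  · have hM₀' : g⁻¹ • M ≠ ⊥ := fun h => hM₀ (by rwa [inv_smul_eq_iff, smul_bot] at h)
    exact inv_smul_eq_iff.mp
      (hN.2.2 _ (hM.pointwise_smul g⁻¹) (subset_pointwise_smul_iff.mp hMN) hM₀')

theorem sSupIndep_insert_of_normal {F : Set (Subgroup H)} (hF : sSupIndep F)
    (hFn : ∀ A ∈ F, A.Normal) {B : Subgroup H} (hB : Disjoint B (sSup F)) :
    sSupIndep (insert B F) := by
  intro A hA
  by_cases hAB : A = B
  · subst hAB
    exact hB.mono_right (sSup_le_sSup fun C hC => (hC.1.resolve_left hC.2))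
  have hAF : A ∈ F := hA.resolve_left hAB
  have : (sSup (F \ {A})).Normal := sSup_normal _ fun C hC => hFn C hC.1
  rw [Set.insert_sdiff_of_notMem (t := {A}) F (Set.notMem_singleton_iff.mpr (Ne.symm hAB)),
    sSup_insert]
  refine disjoint_def.mpr fun {x} hxA hx => ?_
  obtain ⟨b, hb, d, hd, rfl⟩ := mem_sup_of_normal_right.mp hx
  have hdF : d ∈ sSup F := (sSup_le_sSup Set.sdiff_subset : sSup (F \ {A}) ≤ sSup F) hd
  have hb1 : b = 1 :=
    disjoint_def.mp hB hb (by simpa using mul_mem (le_sSup hAF hxA) (inv_mem hdF))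
  subst hb1
  rw [one_mul] at hxA ⊢
  exact disjoint_def.mp (hF hAF) hxA hd

theorem IsMinNormal.isSimpleGroup_of_sup_centralizer_eq_top {A : Subgroup H}
    (hA : IsMinNormal A) (h : A ⊔ centralizer (A : Set H) = ⊤) : IsSimpleGroup A := by
  have : Nontrivial A := (nontrivial_iff_ne_bot A).mpr hA.2.1
  refine ⟨fun W hW => ?_⟩
  have hWA : W.map A.subtype ≤ A := map_subtype_le W
  have hnorm : (W.map A.subtype).Normal := by
    have hW' : ((W.map A.subtype).subgroupOf A).Normal := by
      rwa [subgroupOf, comap_map_eq_self_of_injective A.subtype_injective]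
    rw [← normalizer_eq_top_iff, eq_top_iff, ← h]
    exact sup_le ((normal_subgroupOf_iff_le_normalizer hWA).mp hW')
      ((centralizer_le hWA).trans (centralizer_le_normalizer _))
  by_cases hW₀ : W.map A.subtype = ⊥
  · exact Or.inl ((map_eq_bot_iff_of_injective _ A.subtype_injective).mp hW₀)
  · refine Or.inr (eq_top_iff.mpr ?_)
    rw [← map_subtype_le_map_subtype, hA.2.2 _ hnorm hWA hW₀, ← MonoidHom.range_eq_map,
      range_subtype]

theorem IsMinNormal.exists_sSupIndep_orbit_sSup_eq_top [Finite H] {T₁ : Subgroup H}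
    (hT₁ : IsMinNormal T₁)
    (hsimple : ∀ N : Subgroup H, N.Normal → (∀ g : Γ, g • N ≤ N) → N = ⊥ ∨ N = ⊤) :
    ∃ F ⊆ MulAction.orbit Γ T₁, T₁ ∈ F ∧ sSupIndep F ∧ sSup F = ⊤ := by
  let 𝒮 : Set (Set (Subgroup H)) := {F | F ⊆ MulAction.orbit Γ T₁ ∧ sSupIndep F}
  obtain ⟨F, hT₁F, hF⟩ := (Set.toFinite 𝒮).exists_le_maximal (a := {T₁})
    ⟨Set.singleton_subset_iff.mpr (MulAction.mem_orbit_self T₁), sSupIndep_singleton T₁⟩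
  obtain ⟨hForb, hFind⟩ := hF.prop
  have hFn : ∀ A ∈ F, A.Normal := fun A hA => by
    obtain ⟨g, rfl⟩ := hForb hA
    exact (hT₁.pointwise_smul g).1
  have hJn : (sSup F).Normal := sSup_normal F hFn
  have horb : ∀ g : Γ, g • T₁ ≤ sSup F := by
    intro g
    by_contra hle
    have := (hT₁.pointwise_smul g).1
    -- `g • T₁` is minimal normal, so it meets `sSup F` trivially and would extend `F`
    have hdisj : Disjoint (g • T₁) (sSup F) := by
      rw [disjoint_iff]
      by_contra hne
      exact hle ((hT₁.pointwise_smul g).2.2 _ inferInstance inf_le_left hne ▸ inf_le_right)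
    exact hle (le_sSup (hF.mem_of_prop_insert ⟨Set.insert_subset (MulAction.mem_orbit T₁ g) hForb,
      sSupIndep_insert_of_normal hFind hFn hdisj⟩))
  refine ⟨F, hForb, hT₁F rfl, hFind, ?_⟩
  refine (hsimple _ hJn fun g => ?_).resolve_left
    (ne_bot_of_le_ne_bot hT₁.2.1 (le_sSup (hT₁F rfl)))
  rw [pointwise_smul_subset_iff]
  refine sSup_le fun A hA => ?_
  obtain ⟨h, rfl⟩ := hForb hA
  rw [subset_pointwise_smul_iff, inv_inv, smul_smul]
  exact horb (g * h)

theorem exists_mulEquiv_pi_simple_of_forall_smul_le [Finite H] [Nontrivial H]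
    (hsimple : ∀ N : Subgroup H, N.Normal → (∀ g : Γ, g • N ≤ N) → N = ⊥ ∨ N = ⊤) :
    ∃ (ι T : Type u) (_ : Group T), Finite ι ∧ Nonempty ι ∧ Finite T ∧
      IsSimpleGroup T ∧ Nonempty (H ≃* (ι → T)) := by
  obtain ⟨T₁, hT₁, -⟩ := exists_isMinNormal_le (N := (⊤ : Subgroup H)) normal_top top_ne_bot
  obtain ⟨F, hForb, hT₁F, hFind, hJ⟩ := hT₁.exists_sSupIndep_orbit_sSup_eq_top hsimple
  have hFn : ∀ A ∈ F, A.Normal := fun A hA => by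
    obtain ⟨g, rfl⟩ := hForb hA
    exact (hT₁.pointwise_smul g).1
  have hcomm : ∀ A ∈ F, ∀ B ∈ F, A ≠ B → ∀ x y : H, x ∈ A → y ∈ B → Commute x y :=
    fun A hA B hB hAB =>
      commute_of_normal_of_disjoint _ _ (hFn A hA) (hFn B hB) (hFind.pairwiseDisjoint hA hB hAB)
  have hT₁simple : IsSimpleGroup T₁ := by
    refine hT₁.isSimpleGroup_of_sup_centralizer_eq_top (eq_top_iff.mpr ?_)
    rw [← hJ]
    refine sSup_le fun A hA => ?_
    by_cases hAT : A = T₁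
    · exact hAT ▸ le_sup_left
    · exact le_sup_of_le_right fun x hx => mem_centralizer_iff.mpr fun y hy =>
        hcomm T₁ hT₁F A hA (Ne.symm hAT) y x hy hx
  have : Fintype F := Fintype.ofFinite F
  have hpair : Pairwise fun A B : F => ∀ x y : H, x ∈ (A : Subgroup H) → y ∈ (B : Subgroup H) →
      Commute x y :=
    fun A B hAB => hcomm A A.2 B B.2 (Subtype.coe_ne_coe.mpr hAB)
  have hbij : Function.Bijective (noncommPiCoprod hpair) := by
    refine ⟨injective_noncommPiCoprod_of_iSupIndep ((sSupIndep_iff F).mp hFind), ?_⟩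
    rw [← MonoidHom.range_eq_top, noncommPiCoprod_range, ← sSup_eq_iSup', hJ]
  have hiso : ∀ A : F, Nonempty ((A : Subgroup H) ≃* T₁) := by
    rintro ⟨A, hA⟩
    obtain ⟨g, rfl⟩ := hForb hA
    exact ⟨(equivSMul g T₁).symm⟩
  exact ⟨F, T₁, inferInstance, inferInstance, ⟨⟨T₁, hT₁F⟩⟩, inferInstance, hT₁simple,
    ⟨(MulEquiv.ofBijective _ hbij).symm.trans (MulEquiv.piCongrRight fun A => (hiso A).some)⟩⟩

theorem IsMinNormal.exists_mulEquiv_pi_simple {G : Type u} [Group G] [Finite G] {S : Subgroup G}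
    (hS : IsMinNormal S) :
    ∃ (ι T : Type u) (_ : Group T), Finite ι ∧ Nonempty ι ∧ Finite T ∧
      IsSimpleGroup T ∧ Nonempty (S ≃* (ι → T)) := by
  have := hS.1
  have : Nontrivial S := (nontrivial_iff_ne_bot S).mpr hS.2.1
  refine exists_mulEquiv_pi_simple_of_forall_smul_le (Γ := ConjAct G) fun N hN hinv => ?_
  have hNS : N.map S.subtype ≤ S := map_subtype_le N
  have hnorm : (N.map S.subtype).Normal := by
    refine ⟨fun x hx g => ?_⟩
    obtain ⟨n, hn, rfl⟩ := mem_map.mp hx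
    exact ⟨_, hinv (ConjAct.toConjAct g) (smul_mem_pointwise_smul n _ N hn), rfl⟩
  by_cases hN₀ : N.map S.subtype = ⊥
  · exact Or.inl ((map_eq_bot_iff_of_injective _ S.subtype_injective).mp hN₀)
  · refine Or.inr (eq_top_iff.mpr ?_)
    rw [← map_subtype_le_map_subtype, hS.2.2 _ hnorm hNS hN₀, ← MonoidHom.range_eq_map,
      range_subtype]

end Decomposition

/-- A finite non-solvable group `G` has SN iff it has a unique minimal normal subgroup `S`,
with `S` non-abelian and `G/S` Dedekind (equivalently: every subgroup of `G` containing `S`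
is normal).  Moreover, in that case `S` is the socle of `G` and is a direct product of
isomorphic finite simple groups, and if `S` is simple then the conjugation action of `G` on
`S` is faithful. -/
theorem stmt_4 (G : Type) [Group G] [Finite G] (hns : ¬ IsSolvable G) :
    (HasSN G ↔
      ∃ S : Subgroup G, IsMinNormal S ∧ (∀ T : Subgroup G, IsMinNormal T → T = S) ∧
        (¬ ∀ x ∈ S, ∀ y ∈ S, x * y = y * x) ∧
        (∀ H : Subgroup G, S ≤ H → H.Normal)) ∧
    (HasSN G → ∀ S : Subgroup G, IsMinNormal S →
      (S = socle G ∧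
       (∃ (ι : Type) (T : Type) (_ : Group T), Finite ι ∧ Nonempty ι ∧ Finite T ∧
          IsSimpleGroup T ∧ Nonempty (S ≃* (ι → T))) ∧
       (IsSimpleGroup S → ∀ g : G, (∀ x ∈ S, g * x * g⁻¹ = x) → g = 1))) := by
  have hunique : HasSN G → ∃ S : Subgroup G, IsMinNormal S ∧
      (∀ T : Subgroup G, IsMinNormal T → T = S) ∧ ¬ ∀ x ∈ S, ∀ y ∈ S, x * y = y * x := by
    intro hsn
    obtain ⟨S, hS, hna⟩ := hsn.exists_isMinNormal_nonabelian hns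
    exact ⟨S, hS, fun T hT => hsn.eq_of_isMinNormal hS hna hT, hna⟩
  refine ⟨⟨fun hsn => ?_, fun ⟨S, _, huniq, _, hup⟩ => hasSN_of_forall_isMinNormal_eq huniq hup⟩,
    fun hsn S hS => ?_⟩
  · obtain ⟨S, hS, huniq, hna⟩ := hunique hsn
    exact ⟨S, hS, huniq, hna, fun H => hsn.normal_of_nonabelian_le hS.1 hna⟩
  · obtain ⟨S₀, -, huniq, hna⟩ := hunique hsn
    obtain rfl := huniq S hS
    have := hS.1
    refine ⟨(socle_eq_of_forall_isMinNormal_eq hS huniq).symm, hS.exists_mulEquiv_pi_simple,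
      fun _ g hg => ?_⟩
    have hg : g ∈ centralizer (S : Set G) :=
      mem_centralizer_iff.mpr fun x hx => (mul_inv_eq_iff_eq_mul.mp (hg x hx)).symm
    rwa [centralizer_eq_bot_of_forall_isMinNormal_eq huniq hna, mem_bot] at hg
end

section
/- Let G be a finite group, p a prime, r, s ∈ ℤG, y a central element of ℤG, and e a central idempotent of ℚG such that: (i) r² = s² = rs = sr = 0; (ii) er = r and es = 0; (iii) y(r+s) ∈ pℤG; (iv) yr ∉ pℤG. Then G does not have the nilpotent decomposition property (ND). -/
/-!
The element `n = p⁻¹ y (r + s)` is integral by (iii) and squares to zero by (i), since `y` is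
central. Writing the central idempotent `e` as a sum of primitive central idempotents, ND would
make `n e` integral; but `n e = p⁻¹ y r` by (ii), which is not integral by (iv).
-/

open MonoidAlgebra

/-- An element of `ℚ[G]` lies in (the image of) `ℤ[G]`: all its coefficients are integers. -/
def IsIntegerElt {G : Type*} [Group G] (x : MonoidAlgebra ℚ G) : Prop :=
  ∀ g : G, ∃ m : ℤ, x.coeff g = (m : ℚ)

/-- A central element of a ring. -/
def IsCentralElt {R : Type*} [Ring R] (e : R) : Prop := ∀ x : R, e * x = x * e

/-- A primitive central idempotent: a nonzero central idempotent which is not the sum of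
two nonzero orthogonal central idempotents. -/
def IsPCI {R : Type*} [Ring R] (e : R) : Prop :=
  IsIdempotentElem e ∧ IsCentralElt e ∧ e ≠ 0 ∧
    ¬ ∃ f g : R, IsIdempotentElem f ∧ IsIdempotentElem g ∧ IsCentralElt f ∧ IsCentralElt g ∧
      f ≠ 0 ∧ g ≠ 0 ∧ f * g = 0 ∧ e = f + g

/-- For a central idempotent `e` of a ring `R`, the component `Re` is a division ring:
every nonzero element of `Re` has a two-sided inverse in `Re`, with unit `e`. -/
def ComponentIsDivision {R : Type*} [Ring R] (e : R) : Prop :=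
  ∀ x : R, x * e = x → x ≠ 0 → ∃ y : R, y * e = y ∧ x * y = e ∧ y * x = e

/-- The nilpotent decomposition property: for every nilpotent element `n` of `ℤ[G]`
and every primitive central idempotent `e` of `ℚ[G]`, the product `n * e` lies in `ℤ[G]`. -/
def HasND (G : Type*) [Group G] : Prop :=
  ∀ n : MonoidAlgebra ℚ G, IsIntegerElt n → IsNilpotent n →
    ∀ e : MonoidAlgebra ℚ G, IsPCI e → IsIntegerElt (n * e)

/-- `ℚ[G]` has at most one matrix component: for at most one primitive central idempotent `e`
the simple component `ℚ[G]e` fails to be a division ring. -/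
def AtMostOneMatrixComponent (G : Type*) [Group G] : Prop :=
  ∀ e f : MonoidAlgebra ℚ G, IsPCI e → IsPCI f →
    ¬ ComponentIsDivision e → ¬ ComponentIsDivision f → e = f

section CentralIdempotents

variable {R : Type*} [Ring R]

lemma range_mulLeft_lt_range_mulLeft_add {K : Type*} [Field K] [Algebra K R] {f g : R}
    (hf : IsIdempotentElem f) (hg : IsIdempotentElem g) (hgc : IsCentralElt g)
    (hfg : f * g = 0) (hg0 : g ≠ 0) :
    LinearMap.range (LinearMap.mulLeft K f) < LinearMap.range (LinearMap.mulLeft K (f + g)) := by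
  have hgf : g * f = 0 := by rw [hgc f, hfg]
  refine lt_of_le_of_ne ?_ fun heq => hg0 ?_
  · rintro _ ⟨x, rfl⟩
    exact ⟨f * x, by simp only [LinearMap.mulLeft_apply, ← mul_assoc, add_mul, hf.eq, hgf,
      add_zero]⟩
  · have hg_mem : g ∈ LinearMap.range (LinearMap.mulLeft K (f + g)) :=
      ⟨g, by simp only [LinearMap.mulLeft_apply, add_mul, hfg, hg.eq, zero_add]⟩
    obtain ⟨x, hx⟩ := heq ▸ hg_mem
    rw [LinearMap.mulLeft_apply] at hx
    calc g = g * g := hg.eq.symm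
      _ = 0 := by rw [← hx, ← mul_assoc, hx, hgf, zero_mul]

lemma exists_list_isPCI_sum_eq (K : Type*) [Field K] [Algebra K R] [FiniteDimensional K R]
    (e : R) (he : IsIdempotentElem e) (hec : IsCentralElt e) :
    ∃ L : List R, (∀ f ∈ L, IsPCI f) ∧ L.sum = e := by
  induction hn : Module.finrank K (LinearMap.range (LinearMap.mulLeft K e))
    using Nat.strong_induction_on generalizing e with
  | _ n ih =>
    by_cases he0 : e = 0
    · exact ⟨[], by simp, by simp [he0]⟩
    by_cases hpci : IsPCI e
    · exact ⟨[e], by simpa using hpci, by simp⟩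
    obtain ⟨f, g, hf, hg, hfc, hgc, hf0, hg0, hfg, rfl⟩ :=
      of_not_not fun h => hpci ⟨he, hec, he0, h⟩
    have hgf : g * f = 0 := by rw [hgc f, hfg]
    have hf_lt := Submodule.finrank_lt_finrank_of_lt
      (range_mulLeft_lt_range_mulLeft_add (K := K) hf hg hgc hfg hg0)
    have hg_lt := Submodule.finrank_lt_finrank_of_lt
      (range_mulLeft_lt_range_mulLeft_add (K := K) hg hf hfc hgf hf0)
    rw [add_comm g f, hn] at hg_lt
    rw [hn] at hf_lt
    obtain ⟨Lf, hLf, rfl⟩ := ih _ hf_lt f hf hfc rfl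
    obtain ⟨Lg, hLg, rfl⟩ := ih _ hg_lt g hg hgc rfl
    refine ⟨Lf ++ Lg, fun x hx => ?_, List.sum_append⟩
    rcases List.mem_append.mp hx with hx | hx
    exacts [hLf x hx, hLg x hx]

end CentralIdempotents

section IntegerElements

variable {G : Type*} [Group G]

lemma isIntegerElt_zero : IsIntegerElt (0 : MonoidAlgebra ℚ G) :=
  fun _ => ⟨0, by simp⟩

lemma IsIntegerElt.add {a b : MonoidAlgebra ℚ G} (ha : IsIntegerElt a) (hb : IsIntegerElt b) :
    IsIntegerElt (a + b) := by
  intro g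
  obtain ⟨m, hm⟩ := ha g
  obtain ⟨k, hk⟩ := hb g
  exact ⟨m + k, by rw [coeff_add, Finsupp.add_apply, hm, hk, Int.cast_add]⟩

lemma isIntegerElt_inv_smul_iff {q : ℚ} (hq : q ≠ 0) (x : MonoidAlgebra ℚ G) :
    IsIntegerElt (q⁻¹ • x) ↔ ∀ g : G, ∃ c : ℤ, x.coeff g = q * c := by
  refine forall_congr' fun g => exists_congr fun c => ?_
  rw [coeff_smul_apply, smul_eq_mul, inv_mul_eq_iff_eq_mul₀ hq]

lemma HasND.isIntegerElt_mul [Finite G] (hnd : HasND G) {n : MonoidAlgebra ℚ G}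
    (hn : IsIntegerElt n) (hnil : IsNilpotent n) {e : MonoidAlgebra ℚ G}
    (he : IsIdempotentElem e) (hec : IsCentralElt e) : IsIntegerElt (n * e) := by
  obtain ⟨L, hL, rfl⟩ := exists_list_isPCI_sum_eq ℚ e he hec
  rw [← List.map_id L, ← List.sum_map_mul_left]
  exact List.sum_induction _ (fun _ _ => IsIntegerElt.add) isIntegerElt_zero
    fun x hx => by
      obtain ⟨f, hf, rfl⟩ := List.mem_map.mp hx
      exact hnd n hn hnil f (hL f hf)

end IntegerElements

lemma isNilpotent_mul_of_mul_self_eq_zero {R : Type*} [Ring R] {y a : R} (hy : IsCentralElt y)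
    (ha : a * a = 0) : IsNilpotent (y * a) :=
  ⟨2, by rw [(Commute.mul_pow (hy a) 2), pow_two a, ha, mul_zero]⟩

theorem stmt_11_general (G : Type) [Group G] [Finite G] (p : ℕ) (hp : p.Prime)
    (r s y e : MonoidAlgebra ℚ G)
    (hycentral : IsCentralElt y)
    (he : IsIdempotentElem e) (hecentral : IsCentralElt e)
    (h1 : r * r = 0 ∧ s * s = 0 ∧ r * s = 0 ∧ s * r = 0)
    (h2 : e * r = r ∧ e * s = 0)
    (h3 : ∀ g : G, ∃ c : ℤ, (y * (r + s)).coeff g = (p : ℚ) * (c : ℚ))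
    (h4 : ¬ ∀ g : G, ∃ c : ℤ, (y * r).coeff g = (p : ℚ) * (c : ℚ)) :
    ¬ HasND G := by
  intro hnd
  obtain ⟨hrr, hss, hrs, hsr⟩ := h1
  have hp0 : (p : ℚ) ≠ 0 := by exact_mod_cast hp.ne_zero
  have hsq : (r + s) * (r + s) = 0 := by simp only [add_mul, mul_add, hrr, hss, hrs, hsr, add_zero]
  have hnil : IsNilpotent ((p : ℚ)⁻¹ • (y * (r + s))) :=
    (isNilpotent_mul_of_mul_self_eq_zero hycentral hsq).smul _
  have hne : (p : ℚ)⁻¹ • (y * (r + s)) * e = (p : ℚ)⁻¹ • (y * r) := by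
    rw [smul_mul_assoc, mul_assoc, ← hecentral, mul_add, h2.1, h2.2, add_zero]
  have hint := hnd.isIntegerElt_mul ((isIntegerElt_inv_smul_iff hp0 _).mpr h3) hnil he hecentral
  exact h4 ((isIntegerElt_inv_smul_iff hp0 _).mp (hne ▸ hint))

/-- If `r, s ∈ ℤG`, `y ∈ ℤG` is central, and `e` is a central idempotent of `ℚG` with
(i) `r² = s² = rs = sr = 0`, (ii) `er = r`, `es = 0`, (iii) `y(r+s) ∈ pℤG`,
(iv) `yr ∉ pℤG`, then `G` does not have ND. -/
theorem stmt_11 (G : Type) [Group G] [Finite G] (p : ℕ) (hp : p.Prime)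
    (r s y e : MonoidAlgebra ℚ G)
    (hr : IsIntegerElt r) (hs : IsIntegerElt s) (hy : IsIntegerElt y)
    (hycentral : IsCentralElt y)
    (he : IsIdempotentElem e) (hecentral : IsCentralElt e)
    (h1 : r * r = 0 ∧ s * s = 0 ∧ r * s = 0 ∧ s * r = 0)
    (h2 : e * r = r ∧ e * s = 0)
    (h3 : ∀ g : G, ∃ c : ℤ, (y * (r + s)).coeff g = (p : ℚ) * (c : ℚ))
    (h4 : ¬ ∀ g : G, ∃ c : ℤ, (y * r).coeff g = (p : ℚ) * (c : ℚ)) :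
    ¬ HasND G :=
  stmt_11_general G p hp r s y e hycentral he hecentral h1 h2 h3 h4
end

section
/- Let p be an odd prime, k a positive integer, and X = ⟨x⟩ × ⟨z⟩ ≅ C_{p²} × C_{p^k} with x of order p² and z of order p^k. Then there exist α, β ∈ ℤX such that in ℤX one has (1−x^p)(1−x^p z) + (1−x^{−p})(1−x^{−p} z) ≡ (1−x)^{p+1} α (mod pℤX) and x(1−x^p)(1−x^p z) + x^{−1}(1−x^{−p})(1−x^{−p} z) ≡ (1−x)^{p+1} β (mod pℤX). -/
/-!
Modulo `p`, the freshman's dream (with `p` odd) gives `1 - x ^ p ≡ (1 - x) ^ p` and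
`1 - x ^ (-p) = -x ^ (-p) (1 - x ^ p) ≡ -x ^ (-p) (1 - x) ^ p`. Each of the two sums is
therefore `(1 - x) ^ p` times an element that vanishes modulo `1 - x` (where `x ↦ 1`), i.e.
times a multiple of `1 - x`.
-/

section

variable {A : Type*} [CommRing A] {p : ℕ}

theorem prime_dvd_one_sub_pow_sub_one_sub_pow (hp : p.Prime) (hodd : Odd p) (a : A) :
    (p : A) ∣ (1 - a) ^ p - (1 - a ^ p) := by
  obtain ⟨r, hr⟩ := exists_add_pow_prime_eq hp 1 (-a)
  exact ⟨-a * r, by rw [sub_eq_add_neg 1 a, hr, hodd.neg_pow]; ring⟩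

theorem RingHom.map_units_eq_one_of_mem_zpowers {B : Type*} [Ring B] (f : A →+* B) {t : Aˣ}
    (ht : f t = 1) {g : Aˣ} (hg : g ∈ Subgroup.zpowers t) : f g = 1 := by
  have hle : Subgroup.zpowers t ≤ (Units.map (f : A →* B)).ker :=
    Subgroup.zpowers_le.2 (MonoidHom.mem_ker.2 (Units.ext ht))
  exact congrArg Units.val (MonoidHom.mem_ker.1 (hle hg))

theorem Units.one_sub_dvd_zpow_mul_sub_zpow_mul (t : Aˣ) (u : A) (m : ℤ) :
    1 - (t : A) ∣
      ↑(t ^ m) * (1 - ↑(t ^ p) * u) - ↑(t ^ (-m)) * ↑(t ^ p)⁻¹ * (1 - ↑(t ^ p)⁻¹ * u) := by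
  rw [← Ideal.mem_span_singleton, ← Ideal.Quotient.eq_zero_iff_mem]
  set f := Ideal.Quotient.mk (Ideal.span {1 - (t : A)})
  have ht : f t = 1 := by
    have h : f (1 - t) = 0 := Ideal.Quotient.eq_zero_iff_mem.2 (Ideal.mem_span_singleton_self _)
    rw [map_sub, map_one, sub_eq_zero] at h
    exact h.symm
  have hmem : ∀ g ∈ Subgroup.zpowers t, f g = 1 := fun g hg =>
    f.map_units_eq_one_of_mem_zpowers ht hg
  have ht_pow := Subgroup.pow_mem _ (Subgroup.mem_zpowers t) p
  simp only [map_sub, map_mul, map_one, hmem _ ht_pow, hmem _ (Subgroup.inv_mem _ ht_pow),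
    hmem _ (Subgroup.zpow_mem _ (Subgroup.mem_zpowers t) m),
    hmem _ (Subgroup.zpow_mem _ (Subgroup.mem_zpowers t) (-m))]
  ring

theorem Units.exists_prime_dvd_sub_one_sub_pow_succ_mul (hp : p.Prime) (hodd : Odd p)
    (t : Aˣ) (u : A) (m : ℤ) :
    ∃ α : A, (p : A) ∣
      ↑(t ^ m) * (1 - ↑(t ^ p)) * (1 - ↑(t ^ p) * u) +
        ↑(t ^ (-m)) * (1 - ↑(t ^ p)⁻¹) * (1 - ↑(t ^ p)⁻¹ * u) - (1 - ↑t) ^ (p + 1) * α := by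
  obtain ⟨α, hα⟩ := t.one_sub_dvd_zpow_mul_sub_zpow_mul (p := p) u m
  refine ⟨α, ?_⟩
  set T := t ^ p
  set P := (1 - (t : A)) ^ p
  have hT : (p : A) ∣ (1 - ↑T) - P := by
    simpa [T, P, dvd_sub_comm] using prime_dvd_one_sub_pow_sub_one_sub_pow hp hodd (t : A)
  have hT_inv : (p : A) ∣ (1 - ↑T⁻¹) + ↑T⁻¹ * P := by
    have h : (1 - ↑T⁻¹) + ↑T⁻¹ * P = -↑T⁻¹ * ((1 - ↑T) - P) := by
      linear_combination -T.inv_mul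
    rw [h]
    exact hT.mul_left _
  have h : ↑(t ^ m) * (1 - ↑T) * (1 - ↑T * u) + ↑(t ^ (-m)) * (1 - ↑T⁻¹) * (1 - ↑T⁻¹ * u)
      - (1 - ↑t) ^ (p + 1) * α =
      ↑(t ^ m) * (1 - ↑T * u) * ((1 - ↑T) - P) +
        ↑(t ^ (-m)) * (1 - ↑T⁻¹ * u) * ((1 - ↑T⁻¹) + ↑T⁻¹ * P) := by
    rw [pow_succ, mul_assoc P, ← hα]
    ring
  rw [h]
  exact dvd_add (hT.mul_left _) (hT_inv.mul_left _)

end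

open MonoidAlgebra in
theorem stmt_13_general (p : ℕ) (hp : p.Prime) (hodd : Odd p)
    (X : Type) [CommGroup X] (x z : X) :
    ∃ α β : MonoidAlgebra ℤ X,
      (∃ w : MonoidAlgebra ℤ X,
        ((1 - of ℤ X (x ^ p)) * (1 - of ℤ X (x ^ p * z)) +
            (1 - of ℤ X (x ^ p)⁻¹) * (1 - of ℤ X ((x ^ p)⁻¹ * z))) -
          (1 - of ℤ X x) ^ (p + 1) * α = (p : MonoidAlgebra ℤ X) * w) ∧
      (∃ w : MonoidAlgebra ℤ X,
        (of ℤ X x * (1 - of ℤ X (x ^ p)) * (1 - of ℤ X (x ^ p * z)) +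
            of ℤ X x⁻¹ * (1 - of ℤ X (x ^ p)⁻¹) * (1 - of ℤ X ((x ^ p)⁻¹ * z))) -
          (1 - of ℤ X x) ^ (p + 1) * β = (p : MonoidAlgebra ℤ X) * w) := by
  set t := (of ℤ X).toHomUnits x
  obtain ⟨α, hα⟩ := t.exists_prime_dvd_sub_one_sub_pow_succ_mul hp hodd (of ℤ X z) 0
  obtain ⟨β, hβ⟩ := t.exists_prime_dvd_sub_one_sub_pow_succ_mul hp hodd (of ℤ X z) 1
  refine ⟨α, β, ?_, ?_⟩
  · simpa [t, ← map_pow, ← map_inv, map_mul, dvd_def] using hα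
  · simpa [t, ← map_pow, ← map_inv, map_mul, dvd_def] using hβ

open MonoidAlgebra in
/-- Let `p` be an odd prime, `k ≥ 1` and `X = ⟨x⟩ × ⟨z⟩ ≅ C_{p²} × C_{p^k}`.  Then there are
`α, β ∈ ℤX` with
`(1−x^p)(1−x^p z) + (1−x^{−p})(1−x^{−p} z) ≡ (1−x)^{p+1} α (mod pℤX)` and
`x(1−x^p)(1−x^p z) + x^{−1}(1−x^{−p})(1−x^{−p} z) ≡ (1−x)^{p+1} β (mod pℤX)`. -/
theorem stmt_13 (p : ℕ) (hp : p.Prime) (hodd : Odd p) (k : ℕ) (hk : 0 < k)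
    (X : Type) [CommGroup X] [Finite X] (x z : X)
    (hx : orderOf x = p ^ 2) (hz : orderOf z = p ^ k)
    (hmeet : Subgroup.zpowers x ⊓ Subgroup.zpowers z = ⊥)
    (hjoin : Subgroup.zpowers x ⊔ Subgroup.zpowers z = ⊤) :
    ∃ α β : MonoidAlgebra ℤ X,
      (∃ w : MonoidAlgebra ℤ X,
        ((1 - of ℤ X (x ^ p)) * (1 - of ℤ X (x ^ p * z)) +
            (1 - of ℤ X (x ^ p)⁻¹) * (1 - of ℤ X ((x ^ p)⁻¹ * z))) -
          (1 - of ℤ X x) ^ (p + 1) * α = (p : MonoidAlgebra ℤ X) * w) ∧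
      (∃ w : MonoidAlgebra ℤ X,
        (of ℤ X x * (1 - of ℤ X (x ^ p)) * (1 - of ℤ X (x ^ p * z)) +
            of ℤ X x⁻¹ * (1 - of ℤ X (x ^ p)⁻¹) * (1 - of ℤ X ((x ^ p)⁻¹ * z))) -
          (1 - of ℤ X x) ^ (p + 1) * β = (p : MonoidAlgebra ℤ X) * w) :=
  stmt_13_general p hp hodd X x z
end

section
/- Let u be a unipotent matrix in SL₂(ℤ), i.e. u − 1 is nilpotent. Then u is conjugate inside SL₂(ℤ) to a matrix of the form [[1, m], [0, 1]] for some m ∈ ℤ. -/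
/-!
Since `u - 1` is nilpotent, `det (u - 1) = 0`, so `u` fixes a nonzero integer vector, and after
dividing by the gcd of its entries a primitive one `v`. A primitive vector is the first column of
some `S ∈ SL₂(ℤ)`; then `S⁻¹ u S` fixes `e₁`, so its first column is `(1, 0)` and the
determinant forces the remaining diagonal entry to be `1`.
-/

open Matrix
open scoped MatrixGroups

theorem Matrix.isNilpotent_det {n R : Type*} [Fintype n] [DecidableEq n] [Nonempty n]
    [CommRing R] {M : Matrix n n R} (hM : IsNilpotent M) : IsNilpotent M.det := by
  obtain ⟨k, hk⟩ := hM
  exact ⟨k, by rw [← det_pow, hk, det_zero]⟩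

theorem Matrix.exists_isCoprime_mulVec_eq_zero_of_det_eq_zero {N : Matrix (Fin 2) (Fin 2) ℤ}
    (hN : N.det = 0) : ∃ v : Fin 2 → ℤ, IsCoprime (v 0) (v 1) ∧ N *ᵥ v = 0 := by
  obtain ⟨w, hw0, hNw⟩ := exists_mulVec_eq_zero_iff.mpr hN
  have hgcd : 0 < Int.gcd (w 0) (w 1) := by
    rw [Int.gcd_pos_iff]
    by_contra! h
    exact hw0 (by ext i; fin_cases i <;> simp [h])
  obtain ⟨g, p, q, hg, hpq, hp, hq⟩ := Int.exists_gcd_one' hgcd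
  have hw : w = (g : ℤ) • ![p, q] := by
    ext i; fin_cases i <;> simp [hp, hq, mul_comm]
  refine ⟨![p, q], Int.isCoprime_iff_gcd_eq_one.mpr hpq, ?_⟩
  rw [hw, mulVec_smul] at hNw
  exact (smul_eq_zero.mp hNw).resolve_left (by exact_mod_cast hg.ne')

namespace Matrix.SpecialLinearGroup

variable {R : Type*} [CommRing R]

theorem coe_eq_of_mulVec_single_zero {T : SL(2, R)}
    (hT : (T : Matrix (Fin 2) (Fin 2) R) *ᵥ Pi.single 0 1 = Pi.single 0 1) :
    (T : Matrix (Fin 2) (Fin 2) R) = !![1, T 0 1; 0, 1] := by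
  have h00 : T 0 0 = 1 := by simpa using congrFun hT 0
  have h10 : T 1 0 = 0 := by simpa using congrFun hT 1
  have hdet : T 0 0 * T 1 1 - T 0 1 * T 1 0 = 1 := by
    rw [← det_fin_two]
    exact T.det_coe
  have h11 : T 1 1 = 1 := by
    rw [h00, h10] at hdet
    linear_combination hdet
  ext i j
  fin_cases i <;> fin_cases j <;> simp [h00, h10, h11]

theorem exists_mulVec_single_zero_eq {v : Fin 2 → R} (hv : IsCoprime (v 0) (v 1)) :
    ∃ S : SL(2, R), (S : Matrix (Fin 2) (Fin 2) R) *ᵥ Pi.single 0 1 = v := by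
  obtain ⟨a, b, hab⟩ := hv
  refine ⟨⟨!![v 0, -b; v 1, a], by rw [det_fin_two_of]; linear_combination hab⟩, ?_⟩
  ext i
  fin_cases i <;> simp

theorem exists_conj_eq_unitriangular_of_mulVec_eq_self {u : SL(2, R)} {v : Fin 2 → R}
    (hv : IsCoprime (v 0) (v 1)) (huv : (u : Matrix (Fin 2) (Fin 2) R) *ᵥ v = v) :
    ∃ (S : SL(2, R)) (m : R),
      ((S⁻¹ * u * S : SL(2, R)) : Matrix (Fin 2) (Fin 2) R) = !![1, m; 0, 1] := by
  obtain ⟨S, hS⟩ := exists_mulVec_single_zero_eq hv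
  refine ⟨S, _, coe_eq_of_mulVec_single_zero ?_⟩
  have hSinv : ((S⁻¹ : SL(2, R)) : Matrix (Fin 2) (Fin 2) R) *ᵥ v = Pi.single 0 1 := by
    rw [← hS, mulVec_mulVec, ← coe_mul, inv_mul_cancel, coe_one, one_mulVec]
  rw [coe_mul, coe_mul, ← mulVec_mulVec, ← mulVec_mulVec, hS, huv, hSinv]

end Matrix.SpecialLinearGroup

/-- Every unipotent matrix in `SL₂(ℤ)` is conjugate inside `SL₂(ℤ)` to an upper triangular
matrix `[[1, m], [0, 1]]` with `m ∈ ℤ`. -/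
theorem stmt_15 (u : Matrix.SpecialLinearGroup (Fin 2) ℤ)
    (hu : IsNilpotent ((u : Matrix (Fin 2) (Fin 2) ℤ) - 1)) :
    ∃ (S : Matrix.SpecialLinearGroup (Fin 2) ℤ) (m : ℤ),
      ((S⁻¹ * u * S : Matrix.SpecialLinearGroup (Fin 2) ℤ) : Matrix (Fin 2) (Fin 2) ℤ)
        = !![1, m; 0, 1] := by
  obtain ⟨v, hv, hfix⟩ :=
    exists_isCoprime_mulVec_eq_zero_of_det_eq_zero (isNilpotent_det hu).eq_zero
  rw [sub_mulVec, one_mulVec, sub_eq_zero] at hfix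
  exact SpecialLinearGroup.exists_conj_eq_unitriangular_of_mulVec_eq_self hv hfix
end

section
/- Let G be a finite group. The following are equivalent: (1) G has property SN; (2) for every bicyclic nilpotent element n of ℤG and every normal subgroup N of G one has n·ε(G,N) ∈ ℤG; (3) for every bicyclic nilpotent element n of ℤG and every normal subgroup N of G one has n·N̂ ∈ ℤG. -/
open MonoidAlgebra

open MonoidAlgebra in
/-- `H̃ = Σ_{x ∈ H} x`, the sum of the elements of a subgroup inside the group algebra. -/
noncomputable def tilde {G : Type*} [Group G] (H : Subgroup G) : MonoidAlgebra ℚ G :=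
  ∑ᶠ h ∈ (H : Set G), MonoidAlgebra.of ℚ G h

/-- `Ĥ = (1/|H|) Σ_{x ∈ H} x`. -/
noncomputable def hat {G : Type*} [Group G] (H : Subgroup G) : MonoidAlgebra ℚ G :=
  (Nat.card H : ℚ)⁻¹ • tilde H

open scoped Classical in
/-- `ε(G,G) = Ĝ`, and for a proper normal subgroup `N` of `G`,
`ε(G,N) = N̂ ∏ (1 - M̂)`, the product running over all the preimages `M` in `G` of the
minimal normal subgroups of `G/N`, i.e. over the normal subgroups of `G` minimal among
those properly containing `N`.  (The factors `1 - M̂` are central, so the product does not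
depend on the order in which it is taken.) -/
noncomputable def epsilonIdem {G : Type*} [Group G] [Finite G] (N : Subgroup G) :
    MonoidAlgebra ℚ G :=
  if N = ⊤ then hat (⊤ : Subgroup G)
  else hat N *
    (((Set.toFinite {M : Subgroup G | M.Normal ∧ N < M ∧
        ∀ M' : Subgroup G, M'.Normal → N < M' → M' ≤ M → M' = M}).toFinset.toList.map
      (fun M => 1 - hat M)).prod)

/-- A bicyclic nilpotent element of `ℤ[G] ⊆ ℚ[G]`: one of the form `(1-h)gH̃` or
`H̃g(1-h)` with `g ∈ G`, `h ∈ H ≤ G`. -/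
def IsBicyclicNilpotent {G : Type*} [Group G] (n : MonoidAlgebra ℚ G) : Prop :=
  ∃ (H : Subgroup G) (h g : G), h ∈ H ∧
    (n = (1 - MonoidAlgebra.of ℚ G h) * MonoidAlgebra.of ℚ G g * tilde H ∨
     n = tilde H * MonoidAlgebra.of ℚ G g * (1 - MonoidAlgebra.of ℚ G h))


/-!
For a normal subgroup `K`, `K̂` is central, and `Ĥ K̂ = (H ⊔ K)^` because `Ĥ K̂` is right
invariant under both `H` and `K`. So for a bicyclic `n = (1 - h) g H̃` (or its mirror image),
`n K̂ = |H| (1 - h) g (H ⊔ K)^`. Under SN either `K ≤ H`, and this is `n`, or `H ⊔ K` is normal,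
and it is `0` since the central idempotent `(H ⊔ K)^` absorbs `h`. Every factor of `ε(G,N)` thus
sends `n` to `n` or `0`, and so does `ε(G,N)`.

Conversely, if `N`, `Y` violate SN, there are `h ∈ Y` and `a` with `a⁻¹ h a ∉ N ⊔ Y`, and the
coefficient of `a` in `(1 - h) a Ỹ N̂` is `|Y| / |N ⊔ Y| ∈ (0, 1)`. Taking `N` maximal among the
violations, every normal `M > N` makes `N ⊔ Y ⊔ M` normal, so that `(1 - h) a Ỹ N̂ M̂ = 0` and
multiplying further by the factors `1 - M̂` of `ε(G,N)` changes nothing.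
-/

open scoped Pointwise in
theorem Subgroup.exists_conj_notMem_sup_of_not_normal {G : Type*} [Group G] {N Y : Subgroup G}
    (hN : N.Normal) (hNY : ¬ (N ⊔ Y).Normal) : ∃ y ∈ Y, ∃ a : G, a⁻¹ * y * a ∉ N ⊔ Y := by
  by_contra! hconj
  refine hNY ⟨fun t ht g => ?_⟩
  obtain ⟨m, hm, y, hy, rfl⟩ : t ∈ (N : Set G) * (Y : Set G) := by
    rw [← Subgroup.normal_mul]; exact ht
  have hsplit : g * (m * y) * g⁻¹ = (g * m * g⁻¹) * (g * y * g⁻¹) := by group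
  rw [hsplit]
  exact mul_mem (Subgroup.mem_sup_left (hN.conj_mem m hm g)) (by simpa using hconj y hy g⁻¹)

theorem exists_maximal_failure_of_not_hasSN {G : Type*} [Group G] [Finite G] (h : ¬ HasSN G) :
    ∃ N Y : Subgroup G, N.Normal ∧ ¬ N ≤ Y ∧ ¬ (N ⊔ Y).Normal ∧
      ∀ M : Subgroup G, M.Normal → N < M → (N ⊔ Y ⊔ M).Normal := by
  set S := {N : Subgroup G | N.Normal ∧ ∃ Y, ¬ N ≤ Y ∧ ¬ (N ⊔ Y).Normal}
  have hS : S.Nonempty := by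
    simp only [HasSN, not_forall, not_or] at h
    obtain ⟨N, hN, Y, hNY, hT⟩ := h
    exact ⟨N, hN, Y, hNY, hT⟩
  obtain ⟨N, ⟨hN, Y, hNY, hT⟩, hmax⟩ := S.toFinite.exists_maximalFor id S hS
  refine ⟨N, Y, hN, hNY, hT, fun M hM hNM => ?_⟩
  have hMT : ¬ M ≤ N ⊔ Y := by
    intro hMT
    have hMY : ¬ M ≤ Y := fun hMY => hNY (hNM.le.trans hMY)
    have hsup : M ⊔ Y = N ⊔ Y :=
      le_antisymm (sup_le hMT le_sup_right) (sup_le_sup_right hNM.le Y)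
    exact hNM.not_ge (hmax ⟨hM, Y, hMY, hsup ▸ hT⟩ hNM.le)
  by_contra hMT'
  exact hNM.not_ge (hmax ⟨hM, N ⊔ Y, hMT, sup_comm M (N ⊔ Y) ▸ hMT'⟩ hNM.le)

theorem mul_one_sub_eq_self_or_zero {R : Type*} [Ring R] {x e : R} (h : x * e = x ∨ x * e = 0) :
    x * (1 - e) = x ∨ x * (1 - e) = 0 := by
  rw [mul_sub, mul_one]
  rcases h with h | h <;> simp [h]

theorem mul_list_prod_eq_self_or_zero {M : Type*} [MonoidWithZero M] {x : M} {l : List M}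
    (hl : ∀ e ∈ l, x * e = x ∨ x * e = 0) : x * l.prod = x ∨ x * l.prod = 0 := by
  refine List.prod_induction (fun e => x * e = x ∨ x * e = 0) ?_ (by simp) hl
  rintro a b (ha | ha) hb
  · rwa [← mul_assoc, ha]
  · simp [← mul_assoc, ha]

theorem mul_list_prod_eq_self {M : Type*} [Monoid M] {x : M} {l : List M}
    (hl : ∀ e ∈ l, x * e = x) : x * l.prod = x :=
  List.prod_induction (fun e => x * e = x) (fun a b ha hb => by rw [← mul_assoc, ha, hb])
    (mul_one x) hl

section IntegerElements

variable {G : Type*} [Group G]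

theorem IsIntegerElt.sub {x y : MonoidAlgebra ℚ G} (hx : IsIntegerElt x) (hy : IsIntegerElt y) :
    IsIntegerElt (x - y) := fun g => by
  obtain ⟨m, hm⟩ := hx g
  obtain ⟨m', hm'⟩ := hy g
  exact ⟨m - m', by simp [hm, hm']⟩

theorem IsIntegerElt.of_eq_self_or_zero {x y : MonoidAlgebra ℚ G} (hx : IsIntegerElt x)
    (h : y = x ∨ y = 0) : IsIntegerElt y := by
  rcases h with rfl | rfl
  · exact hx
  · exact fun _ => ⟨0, by simp⟩

theorem isIntegerElt_of_forall_coeff_eq_ite {x : MonoidAlgebra ℚ G} {p : G → Prop}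
    [DecidablePred p] (hx : ∀ g, x.coeff g = if p g then 1 else 0) : IsIntegerElt x :=
  fun g => ⟨if p g then 1 else 0, by rw [hx]; split_ifs <;> simp⟩

end IntegerElements

section GroupAlgebra

open scoped Classical Pointwise

variable {G : Type*} [Group G] [Finite G]

theorem tilde_eq_sum (H : Subgroup G) :
    tilde H = ∑ x ∈ (H : Set G).toFinite.toFinset, of ℚ G x := by
  rw [tilde, ← finsum_mem_coe_finset, Set.Finite.coe_toFinset]

theorem tilde_mul_eq_card_smul {H : Subgroup G} {f : MonoidAlgebra ℚ G}
    (hf : ∀ h ∈ H, of ℚ G h * f = f) : tilde H * f = (Nat.card H : ℚ) • f := by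
  rw [tilde_eq_sum, Finset.sum_mul,
    Finset.sum_congr rfl fun h hh => hf h (by simpa using hh), Finset.sum_const,
    ← Nat.card_eq_card_finite_toFinset, Nat.cast_smul_eq_nsmul]
  rfl

theorem mul_tilde_eq_card_smul {H : Subgroup G} {f : MonoidAlgebra ℚ G}
    (hf : ∀ h ∈ H, f * of ℚ G h = f) : f * tilde H = (Nat.card H : ℚ) • f := by
  rw [tilde_eq_sum, Finset.mul_sum,
    Finset.sum_congr rfl fun h hh => hf h (by simpa using hh), Finset.sum_const,
    ← Nat.card_eq_card_finite_toFinset, Nat.cast_smul_eq_nsmul]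
  rfl

theorem card_subgroup_ne_zero (H : Subgroup G) : (Nat.card H : ℚ) ≠ 0 := by
  exact_mod_cast Nat.card_pos.ne'

theorem tilde_eq_card_smul_hat (H : Subgroup G) : tilde H = (Nat.card H : ℚ) • hat H := by
  rw [hat, smul_smul, mul_inv_cancel₀ (card_subgroup_ne_zero H), one_smul]

theorem hat_mul_eq_self {H : Subgroup G} {f : MonoidAlgebra ℚ G}
    (hf : ∀ h ∈ H, of ℚ G h * f = f) : hat H * f = f := by
  rw [hat, smul_mul_assoc, tilde_mul_eq_card_smul hf, smul_smul,
    inv_mul_cancel₀ (card_subgroup_ne_zero H), one_smul]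

theorem mul_hat_eq_self {H : Subgroup G} {f : MonoidAlgebra ℚ G}
    (hf : ∀ h ∈ H, f * of ℚ G h = f) : f * hat H = f := by
  rw [hat, mul_smul_comm, mul_tilde_eq_card_smul hf, smul_smul,
    inv_mul_cancel₀ (card_subgroup_ne_zero H), one_smul]

theorem coeff_tilde (H : Subgroup G) (x : G) :
    (tilde H).coeff x = if x ∈ H then 1 else 0 := by
  rw [tilde_eq_sum, coeff_sum, Finset.sum_apply']
  simp [of_apply, coeff_single, Finsupp.single_apply]

theorem coeff_of_mul_tilde (a : G) (H : Subgroup G) (x : G) :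
    (of ℚ G a * tilde H).coeff x = if a⁻¹ * x ∈ H then 1 else 0 := by
  rw [of_apply, coeff_single_mul_apply, coeff_tilde, one_mul]

theorem coeff_tilde_mul_of (a : G) (H : Subgroup G) (x : G) :
    (tilde H * of ℚ G a).coeff x = if x * a⁻¹ ∈ H then 1 else 0 := by
  rw [of_apply, coeff_mul_single_apply, coeff_tilde, mul_one]

theorem of_mul_tilde_of_mem {H : Subgroup G} {h : G} (hh : h ∈ H) :
    of ℚ G h * tilde H = tilde H := by
  ext x
  rw [coeff_of_mul_tilde, coeff_tilde, H.mul_mem_cancel_left (H.inv_mem hh)]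

theorem tilde_mul_of_of_mem {H : Subgroup G} {h : G} (hh : h ∈ H) :
    tilde H * of ℚ G h = tilde H := by
  ext x
  rw [coeff_tilde_mul_of, coeff_tilde, H.mul_mem_cancel_right (H.inv_mem hh)]

theorem of_mul_hat_of_mem {H : Subgroup G} {h : G} (hh : h ∈ H) :
    of ℚ G h * hat H = hat H := by
  rw [hat, mul_smul_comm, of_mul_tilde_of_mem hh]

theorem hat_mul_of_of_mem {H : Subgroup G} {h : G} (hh : h ∈ H) :
    hat H * of ℚ G h = hat H := by
  rw [hat, smul_mul_assoc, tilde_mul_of_of_mem hh]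

theorem one_sub_of_mul_hat {T : Subgroup G} {t : G} (ht : t ∈ T) :
    (1 - of ℚ G t) * hat T = 0 := by
  rw [sub_mul, one_mul, of_mul_hat_of_mem ht, sub_self]

theorem hat_mul_one_sub_of {T : Subgroup G} {t : G} (ht : t ∈ T) :
    hat T * (1 - of ℚ G t) = 0 := by
  rw [mul_sub, mul_one, hat_mul_of_of_mem ht, sub_self]

theorem hat_mul_hat_of_le {H K : Subgroup G} (hHK : H ≤ K) : hat H * hat K = hat K :=
  hat_mul_eq_self fun _ hh => of_mul_hat_of_mem (hHK hh)

theorem hat_mul_hat_of_ge {H K : Subgroup G} (hKH : K ≤ H) : hat H * hat K = hat H :=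
  mul_hat_eq_self fun _ hk => hat_mul_of_of_mem (hKH hk)

theorem isCentralElt_tilde {K : Subgroup G} (hK : K.Normal) : IsCentralElt (tilde K) := by
  intro a
  ext x
  rw [coeff_mul_apply_right, coeff_mul_apply_left]
  refine Finsupp.sum_congr fun t _ => ?_
  have hconj : x * t⁻¹ ∈ K ↔ t⁻¹ * x ∈ K := by
    constructor <;> intro h
    · simpa [mul_assoc] using hK.conj_mem _ h t⁻¹
    · simpa [mul_assoc] using hK.conj_mem _ h t
  rw [coeff_tilde, coeff_tilde, hconj, mul_comm]

theorem isCentralElt_hat {K : Subgroup G} (hK : K.Normal) : IsCentralElt (hat K) := fun a => by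
  rw [hat, smul_mul_assoc, mul_smul_comm, isCentralElt_tilde hK]

theorem hat_mul_hat_of_normal {H K : Subgroup G} (hK : K.Normal) :
    hat H * hat K = hat (H ⊔ K) := by
  have hinv : ∀ t ∈ H ⊔ K, hat H * hat K * of ℚ G t = hat H * hat K := by
    intro t ht
    obtain ⟨h, hh, k, hk, rfl⟩ : t ∈ (H : Set G) * (K : Set G) := by
      rw [← Subgroup.mul_normal]; exact ht
    rw [map_mul, ← mul_assoc, mul_assoc (hat H), isCentralElt_hat hK (of ℚ G h), ← mul_assoc,
      hat_mul_of_of_mem hh, mul_assoc, hat_mul_of_of_mem hk]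
  calc hat H * hat K = hat H * hat K * hat (H ⊔ K) := (mul_hat_eq_self hinv).symm
    _ = hat (H ⊔ K) := by
      rw [mul_assoc, hat_mul_hat_of_le le_sup_right, hat_mul_hat_of_le le_sup_left]

theorem tilde_mul_hat_of_normal {H K : Subgroup G} (hK : K.Normal) :
    tilde H * hat K = (Nat.card H : ℚ) • hat (H ⊔ K) := by
  rw [tilde_eq_card_smul_hat, smul_mul_assoc, hat_mul_hat_of_normal hK]

theorem tilde_mul_hat_of_le {H K : Subgroup G} (hKH : K ≤ H) : tilde H * hat K = tilde H := by
  rw [tilde_eq_card_smul_hat, smul_mul_assoc, hat_mul_hat_of_ge hKH]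

end GroupAlgebra

section Bicyclic

variable {G : Type*} [Group G] [Finite G]

theorem IsBicyclicNilpotent.isIntegerElt {n : MonoidAlgebra ℚ G} (hn : IsBicyclicNilpotent n) :
    IsIntegerElt n := by
  classical
  obtain ⟨H, h, g, -, rfl | rfl⟩ := hn
  · rw [mul_assoc, sub_mul, one_mul, ← mul_assoc, ← map_mul]
    exact (isIntegerElt_of_forall_coeff_eq_ite (coeff_of_mul_tilde g H)).sub
      (isIntegerElt_of_forall_coeff_eq_ite (coeff_of_mul_tilde (h * g) H))
  · rw [mul_sub, mul_one, mul_assoc, ← map_mul]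
    exact (isIntegerElt_of_forall_coeff_eq_ite (coeff_tilde_mul_of g H)).sub
      (isIntegerElt_of_forall_coeff_eq_ite (coeff_tilde_mul_of (g * h) H))

theorem one_sub_of_mul_of_mul_hat_of_normal {T : Subgroup G} (hT : T.Normal) {t : G}
    (ht : t ∈ T) (g : G) : (1 - of ℚ G t) * of ℚ G g * hat T = 0 := by
  rw [mul_assoc, ← isCentralElt_hat hT, ← mul_assoc, one_sub_of_mul_hat ht, zero_mul]

theorem hat_mul_of_mul_one_sub_of_of_normal {T : Subgroup G} (hT : T.Normal) {t : G}
    (ht : t ∈ T) (g : G) : hat T * of ℚ G g * (1 - of ℚ G t) = 0 := by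
  rw [isCentralElt_hat hT, mul_assoc, hat_mul_one_sub_of ht, mul_zero]

theorem IsBicyclicNilpotent.mul_hat_eq_self_or_zero (hsn : HasSN G) {n : MonoidAlgebra ℚ G}
    (hn : IsBicyclicNilpotent n) {K : Subgroup G} (hK : K.Normal) :
    n * hat K = n ∨ n * hat K = 0 := by
  obtain ⟨H, h, g, hh, rfl | rfl⟩ := hn <;> rcases hsn K hK H with hKH | hT
  · left
    rw [mul_assoc _ (tilde H), tilde_mul_hat_of_le hKH]
  · right
    rw [mul_assoc _ (tilde H), tilde_mul_hat_of_normal hK, mul_smul_comm, sup_comm,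
      one_sub_of_mul_of_mul_hat_of_normal hT (Subgroup.mem_sup_right hh), smul_zero]
  · left
    rw [← isCentralElt_hat hK, ← mul_assoc, ← mul_assoc, isCentralElt_hat hK (tilde H),
      tilde_mul_hat_of_le hKH]
  · right
    rw [← isCentralElt_hat hK, ← mul_assoc, ← mul_assoc, isCentralElt_hat hK (tilde H),
      tilde_mul_hat_of_normal hK, smul_mul_assoc, smul_mul_assoc, sup_comm,
      hat_mul_of_mul_one_sub_of_of_normal hT (Subgroup.mem_sup_right hh), smul_zero]

theorem epsilonIdem_top : epsilonIdem (⊤ : Subgroup G) = hat ⊤ := if_pos rfl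

theorem exists_epsilonIdem_eq_hat_mul_prod {N : Subgroup G} (hN : N ≠ ⊤) :
    ∃ l : List (Subgroup G), (∀ M ∈ l, M.Normal ∧ N < M) ∧
      epsilonIdem N = hat N * (l.map fun M => 1 - hat M).prod := by
  refine ⟨_, fun M hM => ?_, by rw [epsilonIdem, if_neg hN]⟩
  obtain ⟨hM, hNM, -⟩ := (Set.Finite.mem_toFinset _).mp (Finset.mem_toList.mp hM)
  exact ⟨hM, hNM⟩

theorem IsBicyclicNilpotent.mul_epsilonIdem_eq_self_or_zero (hsn : HasSN G)
    {n : MonoidAlgebra ℚ G} (hn : IsBicyclicNilpotent n) {N : Subgroup G} (hN : N.Normal) :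
    n * epsilonIdem N = n ∨ n * epsilonIdem N = 0 := by
  by_cases htop : N = ⊤
  · subst htop
    rw [epsilonIdem_top]
    exact hn.mul_hat_eq_self_or_zero hsn hN
  obtain ⟨l, hl, heq⟩ := exists_epsilonIdem_eq_hat_mul_prod htop
  rw [heq, ← List.prod_cons]
  refine mul_list_prod_eq_self_or_zero fun e he => ?_
  obtain rfl | hM := List.mem_cons.mp he
  · exact hn.mul_hat_eq_self_or_zero hsn hN
  · obtain ⟨M, hMl, rfl⟩ := List.mem_map.mp hM
    exact mul_one_sub_eq_self_or_zero (hn.mul_hat_eq_self_or_zero hsn (hl M hMl).1)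


theorem coeff_one_sub_of_mul_of_mul_hat {T : Subgroup G} {h a : G} (hconj : a⁻¹ * h * a ∉ T) :
    ((1 - of ℚ G h) * of ℚ G a * hat T).coeff a = (Nat.card T : ℚ)⁻¹ := by
  have hne : (h * a)⁻¹ * a ∉ T := fun hmem =>
    hconj (by simpa [mul_assoc] using T.inv_mem hmem)
  rw [hat, mul_smul_comm, coeff_smul_apply, mul_assoc, sub_mul, one_mul, ← mul_assoc, ← map_mul,
    coeff_sub, Finsupp.sub_apply, coeff_of_mul_tilde, coeff_of_mul_tilde, inv_mul_cancel,
    if_pos T.one_mem, if_neg hne, sub_zero, smul_eq_mul, mul_one]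

theorem not_isIntegerElt_mul_hat {N Y : Subgroup G} (hN : N.Normal) (hNY : ¬ N ≤ Y) {h a : G}
    (hconj : a⁻¹ * h * a ∉ N ⊔ Y) :
    ¬ IsIntegerElt ((1 - of ℚ G h) * of ℚ G a * tilde Y * hat N) := by
  intro hint
  obtain ⟨m, hm⟩ := hint a
  rw [mul_assoc _ (tilde Y), tilde_mul_hat_of_normal hN, mul_smul_comm, coeff_smul_apply,
    sup_comm, coeff_one_sub_of_mul_of_mul_hat hconj, smul_eq_mul, ← div_eq_mul_inv] at hm
  have hlt : Nat.card Y < Nat.card ↥(N ⊔ Y) := by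
    refine (Subgroup.card_le_of_le le_sup_right).lt_of_ne fun heq => hNY ?_
    rw [Subgroup.eq_of_le_of_card_ge le_sup_right heq.ge]
    exact le_sup_left
  have hY : (0 : ℚ) < Nat.card Y := by exact_mod_cast Nat.card_pos
  have hYT : (Nat.card Y : ℚ) < Nat.card ↥(N ⊔ Y) := by exact_mod_cast hlt
  have hm0 : (0 : ℚ) < m := hm ▸ div_pos hY (hY.trans hYT)
  have hm1 : (m : ℚ) < 1 := hm ▸ (div_lt_one (hY.trans hYT)).mpr hYT
  norm_cast at hm0 hm1
  omega

theorem mul_epsilonIdem_eq_mul_hat {N Y : Subgroup G} (hN : N.Normal) (hNtop : N ≠ ⊤)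
    (hmax : ∀ M : Subgroup G, M.Normal → N < M → (N ⊔ Y ⊔ M).Normal) {h : G} (hh : h ∈ Y)
    (a : G) :
    (1 - of ℚ G h) * of ℚ G a * tilde Y * epsilonIdem N
      = (1 - of ℚ G h) * of ℚ G a * tilde Y * hat N := by
  obtain ⟨l, hl, heq⟩ := exists_epsilonIdem_eq_hat_mul_prod hNtop
  rw [heq, ← mul_assoc]
  refine mul_list_prod_eq_self fun e he => ?_
  obtain ⟨M, hMl, rfl⟩ := List.mem_map.mp he
  obtain ⟨hM, hNM⟩ := hl M hMl
  rw [mul_sub, mul_one, sub_eq_self, mul_assoc _ (tilde Y), tilde_mul_hat_of_normal hN,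
    mul_smul_comm, smul_mul_assoc, mul_assoc, hat_mul_hat_of_normal hM, sup_comm Y,
    one_sub_of_mul_of_mul_hat_of_normal (hmax M hM hNM)
      (Subgroup.mem_sup_left (Subgroup.mem_sup_right hh)), smul_zero]

theorem exists_bicyclicNilpotent_not_isIntegerElt_of_not_hasSN (hsn : ¬ HasSN G) :
    ∃ n : MonoidAlgebra ℚ G, IsBicyclicNilpotent n ∧ ∃ N : Subgroup G, N.Normal ∧
      ¬ IsIntegerElt (n * hat N) ∧ n * epsilonIdem N = n * hat N := by
  obtain ⟨N, Y, hN, hNY, hT, hmax⟩ := exists_maximal_failure_of_not_hasSN hsn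
  obtain ⟨h, hh, a, hconj⟩ := Subgroup.exists_conj_notMem_sup_of_not_normal hN hT
  have hNtop : N ≠ ⊤ := by
    rintro rfl
    rw [top_sup_eq] at hT
    exact hT inferInstance
  exact ⟨_, ⟨Y, h, a, hh, Or.inl rfl⟩, N, hN, not_isIntegerElt_mul_hat hN hNY hconj,
    mul_epsilonIdem_eq_mul_hat hN hNtop hmax hh a⟩

end Bicyclic

/-- `G` has SN iff every bicyclic nilpotent element has ND with respect to the idempotents
`ε(G,N)`, iff every bicyclic nilpotent element has ND with respect to the idempotents `N̂`,
for `N` running through the normal subgroups of `G`. -/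
theorem stmt_18 (G : Type) [Group G] [Finite G] :
    (HasSN G ↔ ∀ n : MonoidAlgebra ℚ G, IsBicyclicNilpotent n →
      ∀ N : Subgroup G, N.Normal → IsIntegerElt (n * epsilonIdem N)) ∧
    (HasSN G ↔ ∀ n : MonoidAlgebra ℚ G, IsBicyclicNilpotent n →
      ∀ N : Subgroup G, N.Normal → IsIntegerElt (n * hat N)) := by
  refine ⟨⟨fun hsn n hn N hN => ?_, fun hint => ?_⟩, ⟨fun hsn n hn N hN => ?_, fun hint => ?_⟩⟩
  · exact hn.isIntegerElt.of_eq_self_or_zero (hn.mul_epsilonIdem_eq_self_or_zero hsn hN)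
  · by_contra hsn
    obtain ⟨n, hn, N, hN, hnot, heq⟩ := exists_bicyclicNilpotent_not_isIntegerElt_of_not_hasSN hsn
    exact hnot (heq ▸ hint n hn N hN)
  · exact hn.isIntegerElt.of_eq_self_or_zero (hn.mul_hat_eq_self_or_zero hsn hN)
  · by_contra hsn
    obtain ⟨n, hn, N, hN, hnot, -⟩ := exists_bicyclicNilpotent_not_isIntegerElt_of_not_hasSN hsn
    exact hnot (hint n hn N hN)
end
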